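/- arXiv:2412.11301 — 2 statements merged into one kernel-verified Lean document; each statement's English description precedes it below -/
import Mathlib

section
/- Let N : ℝ^d × ℝ^k → ℝ^d be a differentiable time-step map and define u_{n+1} = N(u_n, p) for n = 0,…,N-1 from u_0, and let ℓ(p) = Φ(u_N(p)) with Φ differentiable. Define λ_N = (∇Φ)(u_N), μ_N = 0, and recursively λ_n = (∂_u N(u_n,p))ᵀ λ_{n+1}, μ_n = (∂_p N(u_n,p))ᵀ λ_{n+1} + μ_{n+1} for n = N-1,…,0. Then ∇_p ℓ = μ_0. -/
open Function Matrix

/-! Differentiating the trajectory `p ↦ u_n(p)` forwards gives the tangent recursion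
`δ_{n+1} = ∂ₓN δ_n + ∂ₚN w`, `δ_0 = 0`, for `δ_n = Du_n(p) w`. The adjoint recursion is exactly
what makes `⟪λ_n, δ_n⟫ + ⟪μ_n, w⟫` independent of `n`. At `n = N` this is
`DΦ(u_N) δ_N = Dℓ(p) w` (as `μ_N = 0`), at `n = 0` it is `⟪μ_0, w⟫` (as `δ_0 = 0`). -/

section Partial

variable {𝕜 E P G : Type*} [NontriviallyNormedField 𝕜]
  [NormedAddCommGroup E] [NormedSpace 𝕜 E] [NormedAddCommGroup P] [NormedSpace 𝕜 P]
  [NormedAddCommGroup G] [NormedSpace 𝕜 G]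

theorem fderiv_uncurry_left_apply {f : E → P → G} {x : E} {p : P}
    (hf : DifferentiableAt 𝕜 (uncurry f) (x, p)) (v : E) :
    fderiv 𝕜 (fun y => f y p) x v = fderiv 𝕜 (uncurry f) (x, p) (v, 0) := by
  have h : HasFDerivAt (fun y => f y p) ((fderiv 𝕜 (uncurry f) (x, p)).comp (.inl 𝕜 E P)) x :=
    hf.hasFDerivAt.comp x (f := fun y => (y, p)) (hasFDerivAt_prodMk_left x p)
  rw [h.fderiv]
  rfl

theorem fderiv_uncurry_right_apply {f : E → P → G} {x : E} {p : P}
    (hf : DifferentiableAt 𝕜 (uncurry f) (x, p)) (w : P) :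
    fderiv 𝕜 (fun q => f x q) p w = fderiv 𝕜 (uncurry f) (x, p) (0, w) := by
  have h : HasFDerivAt (fun q => f x q) ((fderiv 𝕜 (uncurry f) (x, p)).comp (.inr 𝕜 E P)) p :=
    hf.hasFDerivAt.comp p (f := fun q => (x, q)) (hasFDerivAt_prodMk_right x p)
  rw [h.fderiv]
  rfl

theorem fderiv_uncurry_comp_prodMk_apply {f : E → P → G} {u : P → E} {p : P}
    (hf : DifferentiableAt 𝕜 (uncurry f) (u p, p)) (hu : DifferentiableAt 𝕜 u p) (w : P) :
    fderiv 𝕜 (fun q => f (u q) q) p w =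
      fderiv 𝕜 (fun x => f x p) (u p) (fderiv 𝕜 u p w) + fderiv 𝕜 (fun q => f (u p) q) p w := by
  have hcomp : HasFDerivAt (fun q => f (u q) q)
      ((fderiv 𝕜 (uncurry f) (u p, p)).comp ((fderiv 𝕜 u p).prod (.id 𝕜 P))) p :=
    hf.hasFDerivAt.comp p (f := fun q => (u q, q)) (hu.hasFDerivAt.prodMk (hasFDerivAt_id p))
  rw [hcomp.fderiv, fderiv_uncurry_left_apply hf, fderiv_uncurry_right_apply hf, ← map_add,
    Prod.mk_add_mk, add_zero, zero_add]
  rfl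

end Partial

section Trajectory

variable {𝕜 E P : Type*} [NontriviallyNormedField 𝕜]
  [NormedAddCommGroup E] [NormedSpace 𝕜 E] [NormedAddCommGroup P] [NormedSpace 𝕜 P]
  {f : E → P → E} {u : P → ℕ → E}

theorem differentiable_trajectory (hf : Differentiable 𝕜 (uncurry f))
    (h0 : Differentiable 𝕜 (fun p => u p 0)) (hS : ∀ p n, u p (n + 1) = f (u p n) p) (n : ℕ) :
    Differentiable 𝕜 (fun p => u p n) := by
  induction n with
  | zero => exact h0
  | succ n ih =>
    simp only [hS]
    exact hf.comp (ih.prodMk differentiable_id)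

theorem fderiv_trajectory_succ_apply (hf : Differentiable 𝕜 (uncurry f))
    (h0 : Differentiable 𝕜 (fun p => u p 0)) (hS : ∀ p n, u p (n + 1) = f (u p n) p)
    (p w : P) (n : ℕ) :
    fderiv 𝕜 (fun q => u q (n + 1)) p w =
      fderiv 𝕜 (fun x => f x p) (u p n) (fderiv 𝕜 (fun q => u q n) p w)
        + fderiv 𝕜 (fun q => f (u p n) q) p w := by
  simp only [hS]
  exact fderiv_uncurry_comp_prodMk_apply (hf _) (differentiable_trajectory hf h0 hS n p) w

end Trajectory

theorem dotProduct_adjoint_invariant {ι κ R : Type*} [Fintype ι] [Fintype κ]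
    [NonUnitalNonAssocSemiring R] (N : ℕ) (A : ℕ → (ι → R) → ι → R) (B : ℕ → (κ → R) → ι → R)
    (δ : ℕ → ι → R) (w : κ → R) (lam : ℕ → ι → R) (mu : ℕ → κ → R)
    (hδ : ∀ n < N, δ (n + 1) = A n (δ n) + B n w)
    (hlam : ∀ n < N, lam n ⬝ᵥ δ n = lam (n + 1) ⬝ᵥ A n (δ n))
    (hmu : ∀ n < N, mu n ⬝ᵥ w = lam (n + 1) ⬝ᵥ B n w + mu (n + 1) ⬝ᵥ w) :
    lam N ⬝ᵥ δ N + mu N ⬝ᵥ w = lam 0 ⬝ᵥ δ 0 + mu 0 ⬝ᵥ w := by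
  suffices ∀ n ≤ N, lam n ⬝ᵥ δ n + mu n ⬝ᵥ w = lam 0 ⬝ᵥ δ 0 + mu 0 ⬝ᵥ w from this N le_rfl
  intro n hn
  induction n with
  | zero => rfl
  | succ n ih =>
    have hlt : n < N := hn
    rw [← ih hlt.le, hδ n hlt, dotProduct_add, hlam n hlt, hmu n hlt, add_assoc]

/-- Correctness of the discrete adjoint recursion for a general time-stepping
algorithm `u_{n+1} = N(u_n, p)`: the backward-propagated adjoint variables
`λ` (state sensitivity) and `μ` (accumulated parameter gradient) yield the
exact gradient of the loss `ℓ(p) = Φ(u_N)` with respect to `p`. -/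
theorem discrete_adjoint_gradient
    (d k NN : ℕ)
    (Nmap : (Fin d → ℝ) → (Fin k → ℝ) → (Fin d → ℝ))
    (hNmap : Differentiable ℝ (fun q : (Fin d → ℝ) × (Fin k → ℝ) => Nmap q.1 q.2))
    (Φ : (Fin d → ℝ) → ℝ) (hΦ : Differentiable ℝ Φ)
    (u0 : Fin d → ℝ)
    (seq : (Fin k → ℝ) → ℕ → (Fin d → ℝ))
    (hseq0 : ∀ p, seq p 0 = u0)
    (hseqS : ∀ p n, seq p (n + 1) = Nmap (seq p n) p)
    (p₀ : Fin k → ℝ)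
    (lam : ℕ → (Fin d → ℝ)) (mu : ℕ → (Fin k → ℝ))
    (hlamN : ∀ v : Fin d → ℝ, fderiv ℝ Φ (seq p₀ NN) v = dotProduct (lam NN) v)
    (hmuN : mu NN = 0)
    (hlam : ∀ n, n < NN → ∀ v : Fin d → ℝ,
      dotProduct (lam n) v
        = dotProduct (lam (n + 1)) (fderiv ℝ (fun x => Nmap x p₀) (seq p₀ n) v))
    (hmu : ∀ n, n < NN → ∀ w : Fin k → ℝ,
      dotProduct (mu n) w
        = dotProduct (lam (n + 1)) (fderiv ℝ (fun q => Nmap (seq p₀ n) q) p₀ w)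
          + dotProduct (mu (n + 1)) w) :
    ∀ w : Fin k → ℝ,
      fderiv ℝ (fun p => Φ (seq p NN)) p₀ w = dotProduct (mu 0) w := by
  intro w
  have hdiff0 : Differentiable ℝ (fun p => seq p 0) := by
    simpa only [hseq0] using differentiable_const u0
  have hfderiv0 : fderiv ℝ (fun p => seq p 0) p₀ = 0 := by
    simp only [hseq0, fderiv_const_apply]
  have hloss : fderiv ℝ (fun p => Φ (seq p NN)) p₀ w
      = lam NN ⬝ᵥ fderiv ℝ (fun p => seq p NN) p₀ w := by
    rw [fderiv_fun_comp p₀ (hΦ _) (differentiable_trajectory hNmap hdiff0 hseqS NN p₀)]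
    exact hlamN _
  have hinv := dotProduct_adjoint_invariant NN _ _ (fun n => fderiv ℝ (fun p => seq p n) p₀ w) w
    lam mu (fun n _ => fderiv_trajectory_succ_apply hNmap hdiff0 hseqS p₀ w n)
    (fun n hn => hlam n hn _) (fun n hn => hmu n hn w)
  simpa only [hloss, hmuN, zero_dotProduct, add_zero, hfderiv0, _root_.zero_apply,
    dotProduct_zero, zero_add] using hinv
end

section
/- Let F : ℝ^m → ℝ^m be differentiable and consider one step of an s-stage explicit Runge–Kutta method with coefficients (a_{ij}) strictly lower triangular and weights b_i: U_i = u_n + h Σ_{j<i} a_{ij} F(U_j), u_{n+1} = u_n + h Σ_i b_i F(U_i). Then for a differentiable ψ : ℝ^m → ℝ, the gradient ∇_{u_n} ψ(u_{n+1}) equals λ_n, where λ_{n+1} = ∇ψ(u_{n+1}), the stage adjoints satisfy λ^{(i)} = h (DF(U_i))ᵀ (b_i λ_{n+1} + Σ_{j>i} a_{ji} λ^{(j)}) for i = s,…,1, and λ_n = λ_{n+1} + Σ_{j=1}^s λ^{(j)}. -/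
/-!
Differentiating the stage equations gives the tangent recursion
`δU_i = w + h ∑_j a_ij K_j`, `δu_{n+1} = w + h ∑_i b_i K_i` with `K_i = DF(U_i) δU_i`; strict lower
triangularity makes the stages differentiable, by induction on the stage index. Pairing the
tangent equation of stage `i` with `λ⁽ⁱ⁾` and the adjoint equation of stage `i` with `δU_i`, the
double sums `∑ a_ij λ⁽ⁱ⁾ ⬝ K_j` agree after swapping indices, so `∑_i λ⁽ⁱ⁾ ⬝ w = h ∑_i b_i λ_{n+1} ⬝ K_i`,
i.e. `(λ_{n+1} + ∑_i λ⁽ⁱ⁾) ⬝ w = λ_{n+1} ⬝ δu_{n+1}`, which is `Dψ(u_{n+1}) δu_{n+1}` by the chain rule.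
-/

open Matrix

section Linearization

variable {𝕜 E ι : Type*} [NontriviallyNormedField 𝕜] [NormedAddCommGroup E] [NormedSpace 𝕜 E]
  [Fintype ι] {F : E → E} {U : E → ι → E} {x : E}

theorem hasFDerivAt_add_smul_sum_smul_comp (h : 𝕜) (c : ι → 𝕜)
    (hF : ∀ j, DifferentiableAt 𝕜 F (U x j)) (hU : ∀ j, DifferentiableAt 𝕜 (fun v => U v j) x) :
    HasFDerivAt (fun v => v + h • ∑ j, c j • F (U v j))
      (ContinuousLinearMap.id 𝕜 E
        + h • ∑ j, c j • (fderiv 𝕜 F (U x j)).comp (fderiv 𝕜 (fun v => U v j) x)) x :=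
  (hasFDerivAt_id x).add <| HasFDerivAt.const_smul
    (HasFDerivAt.fun_sum fun j _ => ((hF j).hasFDerivAt.comp x (hU j).hasFDerivAt).const_smul (c j)) h

theorem fderiv_add_smul_sum_smul_comp_apply (h : 𝕜) (c : ι → 𝕜)
    (hF : ∀ j, DifferentiableAt 𝕜 F (U x j)) (hU : ∀ j, DifferentiableAt 𝕜 (fun v => U v j) x)
    (w : E) :
    fderiv 𝕜 (fun v => v + h • ∑ j, c j • F (U v j)) x w
      = w + h • ∑ j, c j • fderiv 𝕜 F (U x j) (fderiv 𝕜 (fun v => U v j) x w) := by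
  simp [(hasFDerivAt_add_smul_sum_smul_comp h c hF hU).fderiv]

theorem differentiableAt_stage_of_explicit [LinearOrder ι] {a : ι → ι → 𝕜}
    (hlow : ∀ i j, i ≤ j → a i j = 0) {h : 𝕜} (hF : Differentiable 𝕜 F)
    (hU : ∀ v i, U v i = v + h • ∑ j, a i j • F (U v j)) (i : ι) :
    DifferentiableAt 𝕜 (fun v => U v i) x := by
  induction i using WellFoundedLT.induction with
  | _ i ih =>
    simp_rw [hU _ i]
    refine differentiableAt_id.add <| DifferentiableAt.const_smul (.fun_sum fun j _ => ?_) h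
    rcases lt_or_ge j i with hji | hij
    · exact ((hF _).comp x (ih j hji)).const_smul (a i j)
    · simp only [hlow i j hij, zero_smul]
      exact differentiableAt_const 0

end Linearization

theorem add_sum_dotProduct_eq_dotProduct_of_adjoint {n ι R : Type*} [Fintype n] [Fintype ι]
    [CommRing R] (a : ι → ι → R) (b : ι → R) (h : R) (lam w : n → R) (lamS δ K : ι → n → R)
    (hδ : ∀ i, δ i = w + h • ∑ j, a i j • K j)
    (hadj : ∀ i, lamS i ⬝ᵥ δ i = h * (b i • lam + ∑ j, a j i • lamS j) ⬝ᵥ K i) :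
    (lam + ∑ i, lamS i) ⬝ᵥ w = lam ⬝ᵥ (w + h • ∑ i, b i • K i) := by
  have hδ' : ∀ i, lamS i ⬝ᵥ δ i = lamS i ⬝ᵥ w + h * ∑ j, a i j * lamS i ⬝ᵥ K j := by
    intro i
    simp [hδ i, dotProduct_add, dotProduct_sum, dotProduct_smul]
  have hadj' : ∀ i, lamS i ⬝ᵥ δ i = h * (b i * lam ⬝ᵥ K i + ∑ j, a j i * lamS j ⬝ᵥ K i) := by
    intro i
    simp [hadj i, add_dotProduct, sum_dotProduct, smul_dotProduct]
  have hswap : ∑ i, ∑ j, a i j * lamS i ⬝ᵥ K j = ∑ i, ∑ j, a j i * lamS j ⬝ᵥ K i :=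
    Finset.sum_comm
  have htotal := Finset.sum_congr rfl fun i (_ : i ∈ Finset.univ) => (hδ' i).symm.trans (hadj' i)
  simp only [Finset.sum_add_distrib, ← Finset.mul_sum, mul_add, hswap] at htotal
  simp only [add_dotProduct, sum_dotProduct, dotProduct_add, dotProduct_smul, dotProduct_sum,
    smul_eq_mul, Finset.mul_sum] at htotal ⊢
  linear_combination htotal

theorem erk_discrete_adjoint_general
    (m s : ℕ) (a : Fin s → Fin s → ℝ) (b : Fin s → ℝ)
    (hlow : ∀ i j : Fin s, i ≤ j → a i j = 0)
    (h : ℝ)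
    (F : (Fin m → ℝ) → (Fin m → ℝ)) (hF : Differentiable ℝ F)
    (U : (Fin m → ℝ) → Fin s → (Fin m → ℝ))
    (hU : ∀ v i, U v i = v + h • ∑ j, a i j • F (U v j))
    (step : (Fin m → ℝ) → (Fin m → ℝ))
    (hstep : ∀ v, step v = v + h • ∑ i, b i • F (U v i))
    (ψ : (Fin m → ℝ) → ℝ) (hψ : Differentiable ℝ ψ)
    (un : Fin m → ℝ)
    (lam1 : Fin m → ℝ)
    (hlam1 : ∀ v : Fin m → ℝ, fderiv ℝ ψ (step un) v = dotProduct lam1 v)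
    (lamS : Fin s → (Fin m → ℝ))
    (hlamS : ∀ i : Fin s, ∀ v : Fin m → ℝ,
      dotProduct (lamS i) v
        = h * dotProduct (b i • lam1 + ∑ j, a j i • lamS j)
            (fderiv ℝ F (U un i) v)) :
    ∀ v : Fin m → ℝ,
      fderiv ℝ (fun w => ψ (step w)) un v
        = dotProduct (lam1 + ∑ j, lamS j) v := by
  intro w
  have hstage : ∀ i, DifferentiableAt ℝ (fun v => U v i) un :=
    differentiableAt_stage_of_explicit hlow hF hU
  have hstep_eq : step = fun v => v + h • ∑ i, b i • F (U v i) := funext hstep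
  have hstep_diff : DifferentiableAt ℝ step un := by
    rw [hstep_eq]
    exact (hasFDerivAt_add_smul_sum_smul_comp h b (fun _ => hF _) hstage).differentiableAt
  have hstage_tangent : ∀ i, fderiv ℝ (fun v => U v i) un w
      = w + h • ∑ j, a i j • fderiv ℝ F (U un j) (fderiv ℝ (fun v => U v j) un w) := fun i => by
    simp_rw [hU _ i]
    exact fderiv_add_smul_sum_smul_comp_apply h (a i) (fun _ => hF _) hstage w
  have hstep_tangent : fderiv ℝ step un w
      = w + h • ∑ i, b i • fderiv ℝ F (U un i) (fderiv ℝ (fun v => U v i) un w) := by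
    rw [hstep_eq]
    exact fderiv_add_smul_sum_smul_comp_apply h b (fun _ => hF _) hstage w
  rw [fderiv_fun_comp un (hψ _) hstep_diff, ContinuousLinearMap.comp_apply, hlam1, hstep_tangent]
  exact (add_sum_dotProduct_eq_dotProduct_of_adjoint a b h lam1 w lamS _ _ hstage_tangent
    fun i => hlamS i _).symm

/-- Discrete adjoint of one step of an `s`-stage explicit Runge–Kutta method:
the backward stage recursion produces the exact derivative of `ψ(u_{n+1})`
with respect to the initial state `u_n` of the step. -/
theorem erk_discrete_adjoint
    (m s : ℕ) (a : Fin s → Fin s → ℝ) (b : Fin s → ℝ)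
    (hlow : ∀ i j : Fin s, i ≤ j → a i j = 0)
    (h : ℝ) (hh : 0 < h)
    (F : (Fin m → ℝ) → (Fin m → ℝ)) (hF : Differentiable ℝ F)
    (U : (Fin m → ℝ) → Fin s → (Fin m → ℝ))
    (hU : ∀ v i, U v i = v + h • ∑ j, a i j • F (U v j))
    (step : (Fin m → ℝ) → (Fin m → ℝ))
    (hstep : ∀ v, step v = v + h • ∑ i, b i • F (U v i))
    (ψ : (Fin m → ℝ) → ℝ) (hψ : Differentiable ℝ ψ)
    (un : Fin m → ℝ)
    (lam1 : Fin m → ℝ)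
    (hlam1 : ∀ v : Fin m → ℝ, fderiv ℝ ψ (step un) v = dotProduct lam1 v)
    (lamS : Fin s → (Fin m → ℝ))
    (hlamS : ∀ i : Fin s, ∀ v : Fin m → ℝ,
      dotProduct (lamS i) v
        = h * dotProduct (b i • lam1 + ∑ j, a j i • lamS j)
            (fderiv ℝ F (U un i) v)) :
    ∀ v : Fin m → ℝ,
      fderiv ℝ (fun w => ψ (step w)) un v
        = dotProduct (lam1 + ∑ j, lamS j) v :=
  erk_discrete_adjoint_general m s a b hlow h F hF U hU step hstep ψ hψ un lam1 hlam1 lamS hlamS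
end
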